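/- arXiv:1703.04120 — 4 statements merged into one kernel-verified Lean document; each statement's English description precedes it below -/
import Mathlib

section
/- For any directed multigraph G with n vertices, the polynomial χ_G^{≥} satisfies: χ_G^{≥}(-1) = (-1)^{β₀(G)} if G is totally cyclic, and χ_G^{≥}(-1) = 0 otherwise, where β₀(G) is the number of connected components of G. -/
/-!
Every weak coloring `f : [n] → [q]` factors uniquely as a packed weak coloring `h`, taking exactly
the values `0, …, j - 1`, followed by the increasing enumeration of a `j`-subset of `[q]`. Hence
`χ(q) = ∑_h (q choose j(h))`, and since `(-1 choose j) = (-1)^j`, `χ(-1) = ∑_h (-1)^j(h)`.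

If `G` is totally cyclic, each edge lies on a directed cycle along which a weak coloring can only
stay constant, so weak colorings are the functions on the connected components and `χ = X^β₀`.

Otherwise some edge `a → b` has `b` not reaching `a`. Pick `x` reachable from `b` in a terminal
strong component `C`. On packed colorings, merging the level of `x` with the level above when that
level is exactly `C`, and otherwise splitting `C` off below the rest of its level, is a
sign-reversing involution: the level above exists because `a` lies strictly above `C`.
-/

open Finset

/-- Edge `i` of `G` lies on a directed cycle. -/
def EdgeOnCycle (n k : ℕ) (G : Fin k → Fin n × Fin n) (i : Fin k) : Prop :=
  ∃ m : ℕ, 0 < m ∧ ∃ c : ZMod m → Fin k,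
    (∀ j : ZMod m, (G (c j)).2 = (G (c (j + 1))).1) ∧ ∃ j : ZMod m, c j = i

/-- `G` is totally cyclic: every edge lies on a directed cycle. -/
def TotCyclic (n k : ℕ) (G : Fin k → Fin n × Fin n) : Prop :=
  ∀ i : Fin k, EdgeOnCycle n k G i

/-- Number of connected components of the underlying undirected graph. -/
noncomputable def beta0 (n k : ℕ) (G : Fin k → Fin n × Fin n) : ℕ :=
  Nat.card (SimpleGraph.fromRel fun a b => ∃ i, G i = (a, b) ∨ G i = (b, a)).ConnectedComponent

def SimpleGraph.funConnectedComponentEquiv {V β : Type*} (H : SimpleGraph V) :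
    (H.ConnectedComponent → β) ≃ {f : V → β // ∀ a b, H.Adj a b → f a = f b} where
  toFun c := ⟨fun v => c (H.connectedComponentMk v),
    fun _ _ hab => congrArg c (SimpleGraph.ConnectedComponent.connectedComponentMk_eq_of_adj hab)⟩
  invFun f := Quot.lift f.1 fun _ _ hab => by
    obtain ⟨p⟩ := hab
    induction p with
    | nil => rfl
    | cons hadj _ ih => exact (f.2 _ _ hadj).trans ih
  left_inv c := funext (SimpleGraph.ConnectedComponent.ind fun _ => rfl)
  right_inv _ := rfl

open Polynomial in
lemma Polynomial.eq_of_eval_natCast_eq {R : Type*} [CommRing R] [IsDomain R] [CharZero R]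
    {P Q : R[X]} (h : ∀ q : ℕ, 0 < q → P.eval (q : R) = Q.eval (q : R)) : P = Q := by
  refine eq_of_infinite_eval_eq P Q (Set.infinite_of_injective_forall_mem
    (f := fun m : ℕ => ((m + 1 : ℕ) : R)) (fun a b hab => by simpa using hab) fun m => ?_)
  exact h (m + 1) m.succ_pos

open Polynomial in
lemma descPochhammer_eval_neg_one {K : Type*} [CommRing K] (j : ℕ) :
    (descPochhammer K j).eval (-1) = (-1) ^ j * j.factorial := by
  have h := ascPochhammer_eval_neg_eq_descPochhammer K (-1 : K) j
  rw [neg_neg, ascPochhammer_eval_one] at h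
  rw [h, ← mul_assoc, ← mul_pow, neg_one_mul, neg_neg, one_pow, one_mul]

open Polynomial in
lemma eval_neg_one_of_eval_eq_sum_choose {K ι : Type*} [Field K] [CharZero K] (s : Finset ι)
    (d : ι → ℕ) {P : K[X]}
    (hP : ∀ q : ℕ, 0 < q → P.eval (q : K) = ∑ i ∈ s, (q.choose (d i) : K)) :
    P.eval (-1) = ∑ i ∈ s, (-1) ^ d i := by
  have hfact (i : ι) : ((d i).factorial : K) ≠ 0 := by exact_mod_cast (d i).factorial_ne_zero
  set Q : K[X] := ∑ i ∈ s, C ((d i).factorial : K)⁻¹ * descPochhammer K (d i)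
  have hPQ : P = Q := Polynomial.eq_of_eval_natCast_eq fun q hq => by
    simp only [hP q hq, Q, eval_finsetSum, eval_mul, eval_C, descPochhammer_eval_eq_descFactorial,
      Nat.descFactorial_eq_factorial_mul_choose, Nat.cast_mul, inv_mul_cancel_left₀ (hfact _)]
  simp only [hPQ, Q, eval_finsetSum, eval_mul, eval_C, descPochhammer_eval_neg_one]
  exact Finset.sum_congr rfl fun i _ => by rw [mul_left_comm, inv_mul_cancel₀ (hfact i), mul_one]

lemma Finset.image_univ_eq_range_iff {ι : Type*} [Fintype ι] {f : ι → ℕ} {m : ℕ} :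
    univ.image f = range m ↔ (∀ y, f y < m) ∧ ∀ t < m, ∃ y, f y = t := by
  simp only [Finset.ext_iff, mem_image, mem_univ, true_and, mem_range]
  exact ⟨fun h => ⟨fun y => (h _).1 ⟨y, rfl⟩, fun t ht => (h t).2 ht⟩,
    fun h t => ⟨fun ⟨y, hy⟩ => hy ▸ h.1 y, h.2 t⟩⟩

variable {n k : ℕ} (G : Fin k → Fin n × Fin n)

def IsWeakColoring {α : Type*} [Preorder α] (f : Fin n → α) : Prop :=
  ∀ i, f (G i).2 ≤ f (G i).1

instance {α : Type*} [Preorder α] [DecidableLE α] (f : Fin n → α) :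
    Decidable (IsWeakColoring G f) :=
  inferInstanceAs (Decidable (∀ i, f (G i).2 ≤ f (G i).1))

def Reach : Fin n → Fin n → Prop :=
  Relation.ReflTransGen fun a b => ∃ i, G i = (a, b)

variable {G}

@[refl]
lemma Reach.refl (a : Fin n) : Reach G a a :=
  Relation.ReflTransGen.refl

lemma reach_edge (i : Fin k) : Reach G (G i).1 (G i).2 :=
  .single ⟨i, rfl⟩

lemma IsWeakColoring.le_of_reach {α : Type*} [Preorder α] {f : Fin n → α}
    (hf : IsWeakColoring G f) {a b : Fin n} (h : Reach G a b) : f b ≤ f a := by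
  induction h with
  | refl => rfl
  | tail _ hstep ih =>
    obtain ⟨i, hi⟩ := hstep
    exact (hi ▸ hf i).trans ih

lemma reach_of_edgeOnCycle {i : Fin k} (h : EdgeOnCycle n k G i) : Reach G (G i).2 (G i).1 := by
  obtain ⟨m, hm, c, hc, j, rfl⟩ := h
  have hwalk (t : ℕ) : Reach G (G (c (j + 1))).1 (G (c (j + 1 + t))).1 := by
    induction t with
    | zero => rw [Nat.cast_zero, add_zero]
    | succ t ih =>
      refine ih.trans ?_
      rw [Nat.cast_succ, ← add_assoc, ← hc]
      exact reach_edge _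
  have hperiod : j + 1 + ((m - 1 : ℕ) : ZMod m) = j := by
    rw [Nat.cast_pred hm, ZMod.natCast_self]; ring
  simpa [hc, hperiod] using hwalk (m - 1)

lemma edgeOnCycle_of_reach {i : Fin k} (h : Reach G (G i).2 (G i).1) : EdgeOnCycle n k G i := by
  have hwalk (a : Fin n) (ha : Reach G (G i).2 a) : ∃ m : ℕ, ∃ w : ℕ → Fin k, w 0 = i ∧
      (∀ t < m, (G (w t)).2 = (G (w (t + 1))).1) ∧ (G (w m)).2 = a := by
    induction ha with
    | refl => exact ⟨0, fun _ => i, rfl, by simp, rfl⟩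
    | tail _ hstep ih =>
      obtain ⟨m, w, hw0, hw, hwm⟩ := ih
      obtain ⟨e, he⟩ := hstep
      refine ⟨m + 1, fun t => if t ≤ m then w t else e, by simp [hw0], fun t ht => ?_,
        by simp [he]⟩
      rcases Nat.lt_or_eq_of_le (Nat.lt_succ_iff.1 ht) with ht | rfl
      · simp [ht.le, Nat.succ_le_of_lt ht, hw t ht]
      · simp [hwm, he]
  obtain ⟨m, w, hw0, hw, hwm⟩ := hwalk _ h
  refine ⟨m + 1, m.succ_pos, fun j => w j.val, fun j => ?_, 0, hw0⟩
  have hval : (j + 1).val = (j.val + 1) % (m + 1) := by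
    rw [ZMod.val_add, ZMod.val_one_eq_one_mod, Nat.add_mod_mod]
  beta_reduce
  rcases Nat.lt_or_eq_of_le (Nat.lt_succ_iff.1 (ZMod.val_lt j)) with hj | hj
  · rw [hval, Nat.mod_eq_of_lt (by omega)]
    exact hw _ hj
  · rw [hval, hj, Nat.mod_self, hw0, hwm]

variable (G) in
lemma exists_reach_terminal (b : Fin n) :
    ∃ x, Reach G b x ∧ ∀ y, Reach G x y → Reach G y x := by
  let below : Fin n → Fin n → Prop := fun y x => Reach G x y ∧ ¬Reach G y x
  have : IsTrans _ below := ⟨fun _ _ _ h₁ h₂ => ⟨h₂.1.trans h₁.1, fun h => h₂.2 (h₁.1.trans h)⟩⟩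
  have : Std.Irrefl below := ⟨fun _ h => h.2 h.1⟩
  obtain ⟨x, hbx, hmin⟩ :=
    (Finite.wellFounded_of_trans_of_irrefl below).has_min {x | Reach G b x} ⟨b, Reach.refl b⟩
  exact ⟨x, hbx, fun y hxy => by_contra fun hyx => hmin y (hbx.trans hxy) ⟨hxy, hyx⟩⟩

lemma IsWeakColoring.eq_of_edgeOnCycle {α : Type*} [PartialOrder α] {f : Fin n → α}
    (hf : IsWeakColoring G f) {i : Fin k} (hi : EdgeOnCycle n k G i) : f (G i).1 = f (G i).2 :=
  le_antisymm (hf.le_of_reach (reach_of_edgeOnCycle hi)) (hf i)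

variable (G) in
def underlyingGraph : SimpleGraph (Fin n) :=
  SimpleGraph.fromRel fun a b => ∃ i, G i = (a, b) ∨ G i = (b, a)

lemma isWeakColoring_iff_of_totCyclic (htc : TotCyclic n k G) {α : Type*} [PartialOrder α]
    (f : Fin n → α) : IsWeakColoring G f ↔ ∀ a b, (underlyingGraph G).Adj a b → f a = f b := by
  refine ⟨fun hf a b ⟨_, hab⟩ => ?_, fun hf i => ?_⟩
  · obtain ⟨i, hi | hi⟩ | ⟨i, hi | hi⟩ := hab <;>
      have := hf.eq_of_edgeOnCycle (htc i) <;> simp_all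
  · by_cases hloop : (G i).1 = (G i).2
    · rw [hloop]
    · exact (hf _ _ ⟨hloop, .inl ⟨i, .inl rfl⟩⟩).ge

lemma card_weakColorings_of_totCyclic (htc : TotCyclic n k G) (q : ℕ) :
    #{f : Fin n → Fin q | IsWeakColoring G f} = q ^ beta0 n k G := by
  rw [← Fintype.card_subtype, ← Nat.card_eq_fintype_card, Nat.card_congr
    ((Equiv.subtypeEquivRight (isWeakColoring_iff_of_totCyclic htc)).trans
      (underlyingGraph G).funConnectedComponentEquiv.symm), Nat.card_fun,
    Nat.card_eq_fintype_card, Fintype.card_fin]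
  rfl

def IsPacked (h : Fin n → ℕ) : Prop := ∃ m, univ.image h = range m

instance (h : Fin n → ℕ) : Decidable (IsPacked h) :=
  decidable_of_iff (univ.image h = range #(univ.image h))
    ⟨fun hh => ⟨_, hh⟩, fun ⟨m, hm⟩ => by rw [hm, card_range]⟩

lemma IsPacked.image_eq {h : Fin n → ℕ} (hh : IsPacked h) :
    univ.image h = range #(univ.image h) := by
  obtain ⟨m, hm⟩ := hh
  rw [hm, card_range]

lemma IsPacked.lt_card {h : Fin n → ℕ} (hh : IsPacked h) (y : Fin n) :
    h y < #(univ.image h) :=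
  (Finset.image_univ_eq_range_iff.1 hh.image_eq).1 y

lemma IsPacked.exists_eq {h : Fin n → ℕ} (hh : IsPacked h) {m : ℕ} (hm : m < #(univ.image h)) :
    ∃ y, h y = m :=
  (Finset.image_univ_eq_range_iff.1 hh.image_eq).2 m hm

variable (G) in
def packedColorings : Finset (Fin n → ℕ) :=
  {h ∈ Fintype.piFinset fun _ => range n | IsWeakColoring G h ∧ IsPacked h}

lemma mem_packedColorings {h : Fin n → ℕ} :
    h ∈ packedColorings G ↔ IsWeakColoring G h ∧ IsPacked h := by
  refine ⟨fun hh => (mem_filter.1 hh).2,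
    fun hh => mem_filter.2 ⟨Fintype.mem_piFinset.2 fun y => ?_, hh⟩⟩
  exact mem_range.2 ((hh.2.lt_card y).trans_le (card_image_le.trans (by simp)))

noncomputable def spread {q : ℕ} (t : Finset (Fin q)) (h : Fin n → ℕ) (ht : ∀ y, h y < #t) :
    Fin n → Fin q :=
  fun y => t.orderEmbOfFin rfl ⟨h y, ht y⟩

lemma image_spread {q : ℕ} (t : Finset (Fin q)) {h : Fin n → ℕ} (ht : ∀ y, h y < #t)
    (hsurj : ∀ m < #t, ∃ y, h y = m) : univ.image (spread t h ht) = t := by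
  refine (image_subset_iff.2 fun y _ => t.orderEmbOfFin_mem rfl _).antisymm fun x hx => ?_
  obtain ⟨y, hy⟩ := hsurj _ ((t.orderIsoOfFin rfl).symm ⟨x, hx⟩).2
  refine mem_image.2 ⟨y, mem_univ y, ?_⟩
  simp [hy, ← coe_orderIsoOfFin_apply]

lemma IsWeakColoring.spread {q : ℕ} {t : Finset (Fin q)} {h : Fin n → ℕ} (ht : ∀ y, h y < #t)
    (hw : IsWeakColoring G h) : IsWeakColoring G (spread t h ht) :=
  fun i => (t.orderEmbOfFin rfl).monotone (Fin.mk_le_mk.2 (hw i))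

noncomputable def pack {q : ℕ} (f : Fin n → Fin q) : Fin n → ℕ :=
  fun y => ((univ.image f).orderIsoOfFin rfl).symm ⟨f y, mem_image_of_mem f (mem_univ y)⟩

lemma image_pack {q : ℕ} (f : Fin n → Fin q) : univ.image (pack f) = range #(univ.image f) := by
  refine ext fun m => ⟨fun hm => ?_, fun hm => ?_⟩
  · obtain ⟨y, -, rfl⟩ := mem_image.1 hm
    exact mem_range.2 (Fin.is_lt _)
  · obtain ⟨y, -, hy⟩ := mem_image.1 ((univ.image f).orderIsoOfFin rfl ⟨m, mem_range.1 hm⟩).2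
    refine mem_image.2 ⟨y, mem_univ y, ?_⟩
    dsimp only [pack]
    rw [show (⟨f y, _⟩ : univ.image f) = _ from Subtype.ext hy, OrderIso.symm_apply_apply]

lemma IsWeakColoring.pack {q : ℕ} {f : Fin n → Fin q} (hf : IsWeakColoring G f) :
    IsWeakColoring G (pack f) :=
  fun i => ((univ.image f).orderIsoOfFin rfl).symm.monotone (Subtype.mk_le_mk.2 (hf i))

lemma spread_pack {q : ℕ} (f : Fin n → Fin q) :
    spread (univ.image f) (pack f) (fun _ => Fin.is_lt _) = f := by
  funext y
  simp [spread, pack, ← coe_orderIsoOfFin_apply]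

lemma card_weakColorings_eq_sum (q : ℕ) :
    #{f : Fin n → Fin q | IsWeakColoring G f} =
      ∑ h ∈ packedColorings G, q.choose #(univ.image h) := by
  have hcard (h : Fin n → ℕ) : q.choose #(univ.image h) =
      #(powersetCard #(univ.image h) (univ : Finset (Fin q))) := by simp
  rw [sum_congr rfl fun h _ => hcard h, ← card_sigma]
  symm
  have hpacked {p : Σ _ : Fin n → ℕ, Finset (Fin q)}
      (hp : p ∈ (packedColorings G).sigma fun h => powersetCard #(univ.image h) univ) :
      IsWeakColoring G p.1 ∧ IsPacked p.1 ∧ #p.2 = #(univ.image p.1) :=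
    ⟨(mem_packedColorings.1 (mem_sigma.1 hp).1).1, (mem_packedColorings.1 (mem_sigma.1 hp).1).2,
      (mem_powersetCard.1 (mem_sigma.1 hp).2).2⟩
  have hlt {p : Σ _ : Fin n → ℕ, Finset (Fin q)} (hp) (y : Fin n) : p.1 y < #p.2 :=
    (hpacked hp).2.2 ▸ (hpacked hp).2.1.lt_card y
  have himage {p : Σ _ : Fin n → ℕ, Finset (Fin q)} (hp) :
      univ.image (spread p.2 p.1 (hlt hp)) = p.2 :=
    image_spread _ _ fun m hm => (hpacked hp).2.1.exists_eq ((hpacked hp).2.2 ▸ hm)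
  refine card_bij (fun p hp => spread p.2 p.1 (hlt hp))
    (fun p hp => mem_filter.2 ⟨mem_univ _, (hpacked hp).1.spread _⟩) ?_ fun f hf => ?_
  · rintro ⟨h, t⟩ hp ⟨h', t'⟩ hp' heq
    obtain rfl : t = t' :=
      (himage hp).symm.trans ((congrArg (univ.image ·) heq).trans (himage hp'))
    obtain rfl : h = h' := funext fun y =>
      congrArg Fin.val ((t.orderEmbOfFin rfl).injective (congrFun heq y))
    rfl
  · refine ⟨⟨pack f, univ.image f⟩, mem_sigma.2 ⟨mem_packedColorings.2
      ⟨(mem_filter.1 hf).2.pack, _, image_pack f⟩, mem_powersetCard.2 ⟨subset_univ _, ?_⟩⟩,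
      spread_pack f⟩
    rw [image_pack, card_range]

def mergeLevel (v : ℕ) (f : Fin n → ℕ) : Fin n → ℕ :=
  fun y => if f y ≤ v then f y else f y - 1

variable (G) in
open Classical in
noncomputable def splitLevel (x : Fin n) (f : Fin n → ℕ) : Fin n → ℕ :=
  fun y => if Reach G x y ∨ f y < f x then f y else f y + 1

variable (G) in
def HasOwnLevel (x : Fin n) (f : Fin n → ℕ) : Prop :=
  ∀ y, f y = f x → Reach G x y

lemma IsWeakColoring.mergeLevel {f : Fin n → ℕ} (hf : IsWeakColoring G f) (v : ℕ) :
    IsWeakColoring G (mergeLevel v f) := by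
  intro i
  have := hf i
  simp only [_root_.mergeLevel]
  split_ifs <;> omega

lemma image_mergeLevel {f : Fin n → ℕ} {m v : ℕ} (hf : univ.image f = range m) (hv : v + 1 < m) :
    univ.image (mergeLevel v f) = range (m - 1) := by
  rw [Finset.image_univ_eq_range_iff] at hf ⊢
  refine ⟨fun y => ?_, fun t ht => ?_⟩
  · have := hf.1 y
    simp only [mergeLevel]
    split_ifs <;> omega
  · obtain ⟨y, hy⟩ := hf.2 (if t ≤ v then t else t + 1) (by split_ifs <;> omega)
    refine ⟨y, ?_⟩
    simp only [mergeLevel, hy]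
    split_ifs <;> omega

lemma IsWeakColoring.splitLevel {f : Fin n → ℕ} (hf : IsWeakColoring G f) (x : Fin n) :
    IsWeakColoring G (splitLevel G x f) := by
  intro i
  have hle := hf i
  have hreach : Reach G x (G i).1 → Reach G x (G i).2 := fun h => h.tail ⟨i, rfl⟩
  simp only [_root_.splitLevel]
  by_cases h₁ : Reach G x (G i).1 <;> by_cases h₂ : Reach G x (G i).2 <;> simp_all <;>
    split_ifs <;> omega

lemma splitLevel_self (x : Fin n) (f : Fin n → ℕ) : splitLevel G x f x = f x := by
  simp [splitLevel, Reach.refl]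

lemma hasOwnLevel_splitLevel (x : Fin n) (f : Fin n → ℕ) :
    HasOwnLevel G x (splitLevel G x f) := by
  intro y hy
  by_contra hxy
  rw [splitLevel_self] at hy
  simp only [splitLevel, hxy, false_or] at hy
  split_ifs at hy <;> omega

lemma IsWeakColoring.add_one_lt_of_hasOwnLevel {x a : Fin n} (hax : Reach G a x)
    (hxa : ¬Reach G x a) {f : Fin n → ℕ} (hf : IsWeakColoring G f) (hown : HasOwnLevel G x f)
    {m : ℕ} (hm : univ.image f = range m) : f x + 1 < m := by
  have hle := hf.le_of_reach hax
  have hne : f a ≠ f x := fun h => hxa (hown a h)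
  have := (Finset.image_univ_eq_range_iff.1 hm).1 a
  omega

section TerminalVertex

variable {x : Fin n} (hx : ∀ y, Reach G x y → Reach G y x) {f : Fin n → ℕ}
  (hf : IsWeakColoring G f)
include hx hf

lemma IsWeakColoring.apply_eq_of_reach {y : Fin n} (hy : Reach G x y) : f y = f x :=
  le_antisymm (hf.le_of_reach hy) (hf.le_of_reach (hx y hy))

lemma image_splitLevel {m : ℕ} (hm : univ.image f = range m) (hown : ¬HasOwnLevel G x f) :
    univ.image (splitLevel G x f) = range (m + 1) := by
  simp only [HasOwnLevel, not_forall] at hown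
  obtain ⟨y₀, hy₀, hxy₀⟩ := hown
  rw [Finset.image_univ_eq_range_iff] at hm ⊢
  have hxm := hm.1 x
  refine ⟨fun y => ?_, fun t ht => ?_⟩
  · have := hm.1 y
    simp only [splitLevel]
    split_ifs <;> omega
  rcases lt_trichotomy t (f x) with hlt | rfl | hgt
  · obtain ⟨y, rfl⟩ := hm.2 t (by omega)
    exact ⟨y, by simp [splitLevel, hlt]⟩
  · exact ⟨x, splitLevel_self x f⟩
  · obtain rfl | hgt := eq_or_lt_of_le (Nat.succ_le_of_lt hgt)
    · exact ⟨y₀, by simp [splitLevel, hxy₀, hy₀]⟩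
    obtain ⟨y, hy⟩ := hm.2 (t - 1) (by omega)
    have hxy : ¬Reach G x y := fun h => by have := hf.apply_eq_of_reach hx h; omega
    refine ⟨y, ?_⟩
    simp only [splitLevel, hxy, hy, false_or]
    split_ifs <;> omega

lemma mergeLevel_splitLevel : mergeLevel (f x) (splitLevel G x f) = f := by
  funext y
  by_cases hxy : Reach G x y
  · simp [mergeLevel, splitLevel, hxy, hf.apply_eq_of_reach hx hxy]
  · simp only [mergeLevel, splitLevel, hxy, false_or]
    split_ifs <;> omega

lemma not_hasOwnLevel_mergeLevel {m : ℕ} (hm : univ.image f = range m) (hxm : f x + 1 < m) :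
    ¬HasOwnLevel G x (mergeLevel (f x) f) := by
  obtain ⟨y, hy⟩ := (Finset.image_univ_eq_range_iff.1 hm).2 _ hxm
  intro hown
  have hxy := hown y (by simp [mergeLevel, hy])
  have := hf.apply_eq_of_reach hx hxy
  omega

lemma splitLevel_mergeLevel (hown : HasOwnLevel G x f) :
    splitLevel G x (mergeLevel (f x) f) = f := by
  funext y
  by_cases hxy : Reach G x y
  · simp [mergeLevel, splitLevel, hxy, hf.apply_eq_of_reach hx hxy]
  · have hne : f y ≠ f x := fun h => hxy (hown y h)
    simp only [mergeLevel, splitLevel, hxy, false_or, le_refl, if_true]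
    split_ifs <;> omega

end TerminalVertex

lemma sum_packedColorings_neg_one_pow_eq_zero {R : Type*} [Ring R] {x a : Fin n}
    (hx : ∀ y, Reach G x y → Reach G y x) (hax : Reach G a x) (hxa : ¬Reach G x a) :
    ∑ f ∈ packedColorings G, (-1 : R) ^ #(univ.image f) = 0 := by
  classical
  rw [← sum_filter_add_sum_filter_not _ (HasOwnLevel G x), add_eq_zero_iff_eq_neg,
    ← sum_neg_distrib]
  have hmem {f} (hf : f ∈ packedColorings G) :=
    (mem_packedColorings.1 hf).imp_right IsPacked.image_eq
  refine sum_nbij' (fun f => mergeLevel (f x) f) (splitLevel G x) (fun f hf => ?_)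
    (fun f hf => ?_) (fun f hf => ?_) (fun f hf => ?_) (fun f hf => ?_)
  all_goals
    obtain ⟨hf, hown⟩ := mem_filter.1 hf
    obtain ⟨hf, hm⟩ := hmem hf
  · have hxm := hf.add_one_lt_of_hasOwnLevel hax hxa hown hm
    exact mem_filter.2 ⟨mem_packedColorings.2 ⟨hf.mergeLevel _, _, image_mergeLevel hm hxm⟩,
      not_hasOwnLevel_mergeLevel hx hf hm hxm⟩
  · exact mem_filter.2 ⟨mem_packedColorings.2
      ⟨hf.splitLevel x, _, image_splitLevel hx hf hm hown⟩, hasOwnLevel_splitLevel x f⟩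
  · exact splitLevel_mergeLevel hx hf hown
  · rw [splitLevel_self, mergeLevel_splitLevel hx hf]
  · have hxm := hf.add_one_lt_of_hasOwnLevel hax hxa hown hm
    rw [image_mergeLevel hm hxm, card_range, ← neg_one_mul ((-1 : R) ^ _), ← pow_succ',
      Nat.sub_add_cancel (by omega)]

/-- For the polynomial `P = χ_G^≥` interpolating the weak order-preserving
coloring counts, `P(-1) = (-1)^{β₀ G}` if `G` is totally cyclic and `P(-1) = 0`
otherwise. -/
theorem stmt7 (n k : ℕ) (G : Fin k → Fin n × Fin n) (P : Polynomial ℚ)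
    (hP : ∀ q : ℕ, 0 < q → P.eval (q : ℚ)
      = ((univ.filter fun f : Fin n → Fin q => ∀ i, f (G i).2 ≤ f (G i).1).card : ℚ)) :
    (TotCyclic n k G → P.eval (-1) = (-1 : ℚ) ^ beta0 n k G) ∧
    (¬ TotCyclic n k G → P.eval (-1) = 0) := by
  have hcount (q : ℕ) (hq : 0 < q) :
      P.eval (q : ℚ) = #{f : Fin n → Fin q | IsWeakColoring G f} :=
    hP q hq
  refine ⟨fun htc => ?_, fun hntc => ?_⟩
  · have hPX : P = Polynomial.X ^ beta0 n k G := Polynomial.eq_of_eval_natCast_eq fun q hq => by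
      simp [hcount q hq, card_weakColorings_of_totCyclic htc]
    simp [hPX]
  · obtain ⟨i, hi⟩ := not_forall.1 hntc
    obtain ⟨x, hbx, hx⟩ := exists_reach_terminal G (G i).2
    rw [eval_neg_one_of_eval_eq_sum_choose _ _ fun q hq => by
      rw [hcount q hq, card_weakColorings_eq_sum, Nat.cast_sum]]
    exact sum_packedColorings_neg_one_pow_eq_zero hx ((reach_edge i).trans hbx)
      fun hxa => hi (edgeOnCycle_of_reach (hbx.trans hxa))
end

section
/- For any loopless directed multigraph G with k edges, B_G(q,y,z) = Σ_{Φ ⊆ G} [B_Φ]_{e(Φ)}(q, y−1, z−1), where the sum is over all spanning subgraphs Φ (edge-subsets) of G, e(Φ) is the number of edges of Φ, and [P]_m selects the terms of P of total degree m in y and z. -/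
/-!
Fix a colouring `f` and call an edge ascending, descending or level according to how `f`
compares its endpoints. Writing `y = (y - 1) + 1` and `z = (z - 1) + 1` and expanding the product
over the non-level edges gives `y ^ asc * z ^ desc = ∑_{Φ} (y - 1) ^ asc(Φ) * (z - 1) ^ desc(Φ)`,
the sum running over the sets `Φ` of non-level edges. On the other side, the term of `f` in `B_Φ`
is a monomial of degree `#Φ` exactly when `Φ` has no level edge, so the truncation `[B_Φ]_{e(Φ)}`
keeps precisely these terms. Summing over `f` gives the identity.
-/

open Finset

/-- Bernardi polynomial of the spanning subgraph of `G` with edge set `S`, at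
`q` colors, as a polynomial in `y = X 0`, `z = X 1`. -/
noncomputable def BpolyOn (n k q : ℕ) (G : Fin k → Fin n × Fin n) (S : Finset (Fin k)) :
    MvPolynomial (Fin 2) ℚ :=
  ∑ f : Fin n → Fin q,
    MvPolynomial.X 0 ^ (S.filter fun i => f (G i).1 < f (G i).2).card *
    MvPolynomial.X 1 ^ (S.filter fun i => f (G i).2 < f (G i).1).card

/-- Truncation `[P]_m`: keep only monomials of total degree `m` in `y,z`. -/
noncomputable def trunc (m : ℕ) (P : MvPolynomial (Fin 2) ℚ) : MvPolynomial (Fin 2) ℚ :=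
  ∑ d ∈ P.support.filter fun d => d 0 + d 1 = m, MvPolynomial.monomial d (P.coeff d)

open MvPolynomial

section
variable {ι : Type*} {p q : ι → Prop} [DecidablePred p] [DecidablePred q]

theorem prod_ite_eq_pow_mul_pow {M : Type*} [CommMonoid M] (hpq : ∀ i, p i → ¬ q i)
    {S : Finset ι} (hS : ∀ i ∈ S, p i ∨ q i) (x y : M) :
    ∏ i ∈ S, (if p i then x else y) = x ^ #(S.filter p) * y ^ #(S.filter q) := by
  have hfilter : S.filter (fun i => ¬ p i) = S.filter q := by
    refine filter_congr fun i hi => ?_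
    have := hS i hi
    have := hpq i
    tauto
  rw [prod_ite, prod_const, prod_const, hfilter]

theorem card_filter_add_card_filter_eq_iff (hpq : ∀ i, p i → ¬ q i) (S : Finset ι) :
    #(S.filter p) + #(S.filter q) = #S ↔ ∀ i ∈ S, p i ∨ q i := by
  classical
  rw [← card_union_of_disjoint (disjoint_filter.mpr fun i _ => hpq i), ← filter_or,
    card_filter_eq_iff]

theorem pow_mul_pow_eq_sum_powerset {R : Type*} [CommRing R] (hpq : ∀ i, p i → ¬ q i)
    (s : Finset ι) (x y : R) :
    x ^ #(s.filter p) * y ^ #(s.filter q) =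
      ∑ S ∈ s.powerset, if #(S.filter p) + #(S.filter q) = #S then
        (x - 1) ^ #(S.filter p) * (y - 1) ^ #(S.filter q) else 0 := by
  set N := s.filter fun i => p i ∨ q i
  have hN : ∀ i ∈ N, p i ∨ q i := fun i hi => (mem_filter.mp hi).2
  have hNp : N.filter p = s.filter p := by
    rw [filter_filter]; exact filter_congr fun i _ => by tauto
  have hNq : N.filter q = s.filter q := by
    rw [filter_filter]; exact filter_congr fun i _ => by tauto
  have hpowerset : s.powerset.filter (fun S => ∀ i ∈ S, p i ∨ q i) = N.powerset := by
    ext S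
    simp only [mem_filter, mem_powerset, subset_iff, N]
    grind
  calc x ^ #(s.filter p) * y ^ #(s.filter q)
      = ∏ i ∈ N, ((if p i then x - 1 else y - 1) + 1) := by
        rw [← hNp, ← hNq, ← prod_ite_eq_pow_mul_pow hpq hN]
        exact prod_congr rfl fun i _ => by split_ifs <;> rw [sub_add_cancel]
    _ = ∑ S ∈ N.powerset, ∏ i ∈ S, (if p i then x - 1 else y - 1) := prod_add_one N
    _ = ∑ S ∈ s.powerset, if ∀ i ∈ S, p i ∨ q i then
          ∏ i ∈ S, (if p i then x - 1 else y - 1) else 0 := by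
        rw [← sum_filter, hpowerset]
    _ = _ := by
        refine sum_congr rfl fun S _ => ?_
        simp only [card_filter_add_card_filter_eq_iff hpq]
        split_ifs with hS
        · exact prod_ite_eq_pow_mul_pow hpq hS _ _
        · rfl
end

theorem coeff_trunc (m : ℕ) (P : MvPolynomial (Fin 2) ℚ) (e : Fin 2 →₀ ℕ) :
    (trunc m P).coeff e = if e 0 + e 1 = m then P.coeff e else 0 := by
  rw [trunc, coeff_sum]
  simp only [coeff_monomial, sum_ite_eq', mem_filter, mem_support_iff]
  split_ifs <;> tauto

theorem trunc_sum {ι : Type*} (s : Finset ι) (m : ℕ) (P : ι → MvPolynomial (Fin 2) ℚ) :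
    trunc m (∑ i ∈ s, P i) = ∑ i ∈ s, trunc m (P i) := by
  ext e
  simp only [coeff_trunc, coeff_sum]
  split_ifs <;> simp

theorem trunc_monomial (m : ℕ) (d : Fin 2 →₀ ℕ) (c : ℚ) :
    trunc m (monomial d c) = if d 0 + d 1 = m then monomial d c else 0 := by
  ext e
  rw [coeff_trunc, coeff_monomial]
  by_cases hde : d = e
  · subst hde
    split_ifs <;> simp_all
  · split_ifs <;> simp [hde]

theorem trunc_X_pow_mul_X_pow (m a b : ℕ) :
    trunc m (X 0 ^ a * X 1 ^ b : MvPolynomial (Fin 2) ℚ) =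
      if a + b = m then X 0 ^ a * X 1 ^ b else 0 := by
  rw [X_pow_eq_monomial, X_pow_eq_monomial, monomial_mul, one_mul, trunc_monomial]
  simp

theorem bind₁_trunc_bpolyOn (n k q : ℕ) (G : Fin k → Fin n × Fin n) (S : Finset (Fin k)) :
    (bind₁ fun j : Fin 2 => (X j - 1 : MvPolynomial (Fin 2) ℚ))
        (trunc #S (BpolyOn n k q G S)) =
      ∑ f : Fin n → Fin q,
        if #(S.filter fun i => f (G i).1 < f (G i).2)
            + #(S.filter fun i => f (G i).2 < f (G i).1) = #S
        then (X 0 - 1) ^ #(S.filter fun i => f (G i).1 < f (G i).2)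
            * (X 1 - 1) ^ #(S.filter fun i => f (G i).2 < f (G i).1)
        else 0 := by
  rw [BpolyOn, trunc_sum, map_sum]
  refine sum_congr rfl fun f _ => ?_
  rw [trunc_X_pow_mul_X_pow]
  split_ifs <;> simp

theorem stmt8_general (n k q : ℕ) (G : Fin k → Fin n × Fin n) :
    BpolyOn n k q G univ =
      ∑ S ∈ (univ : Finset (Fin k)).powerset,
        (MvPolynomial.bind₁ fun j : Fin 2 => MvPolynomial.X j - 1)
          (trunc S.card (BpolyOn n k q G S)) := by
  simp only [bind₁_trunc_bpolyOn]
  rw [sum_comm, BpolyOn]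
  exact sum_congr rfl fun f _ => pow_mul_pow_eq_sum_powerset (fun _ => lt_asymm) _ _ _

/-- For loopless `G`: `B_G(q,y,z) = ∑_{Φ ⊆ G} [B_Φ]_{e(Φ)}(q, y-1, z-1)`. -/
theorem stmt8 (n k q : ℕ) (hq : 0 < q) (G : Fin k → Fin n × Fin n)
    (hG : ∀ i, (G i).1 ≠ (G i).2) :
    BpolyOn n k q G univ =
      ∑ S ∈ (univ : Finset (Fin k)).powerset,
        (MvPolynomial.bind₁ fun j : Fin 2 => MvPolynomial.X j - 1)
          (trunc S.card (BpolyOn n k q G S)) :=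
  stmt8_general n k q G
end

section
/- Let G be a loopless undirected multigraph on {1,...,n} with k edges. Then Σ_{Φ ⊆ G} 2^{k−e(Φ)} (−1)^{k−e(Φ)} Z_Φ(q,v) = (−1)^k Z_G(q,−v), where the sum runs over all spanning subgraphs Φ (edge-subsets) of G and e(Φ) is the number of edges of Φ. -/
/-!
Fix a colouring and write `a_e = 1 + v δ_e` for the Potts weight of edge `e`. Then the weight at
`-v` is `1 - v δ_e = 2 - a_e`, so `(-1)^k ∏_e (2 - a_e) = ∏_e (a_e - 2)`, and expanding this product
over subsets of edges gives `∑_S (-2)^(k - |S|) ∏_{e ∈ S} a_e`. Summing over colourings yields the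
identity.
-/

open Finset

/-- Potts partition function of the spanning subgraph of `G` with edge set `S`,
at `q` colors. -/
noncomputable def ZOn (n k q : ℕ) (G : Fin k → Fin n × Fin n) (S : Finset (Fin k)) (v : ℂ) : ℂ :=
  ∑ f : Fin n → Fin q, ∏ i ∈ S, (1 + v * (if f (G i).1 = f (G i).2 then 1 else 0))

theorem Finset.prod_add_const {ι R : Type*} [CommSemiring R] [DecidableEq ι] (s : Finset ι)
    (f : ι → R) (c : R) :
    ∏ i ∈ s, (f i + c) = ∑ t ∈ s.powerset, c ^ (#s - #t) * ∏ i ∈ t, f i := by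
  rw [prod_add]
  refine sum_congr rfl fun t ht => ?_
  rw [prod_const, card_sdiff_of_subset (mem_powerset.1 ht), mul_comm]

theorem Finset.sum_powerset_two_pow_neg_one_pow_mul_prod {ι R : Type*} [CommRing R]
    [DecidableEq ι] (s : Finset ι) (a : ι → R) :
    ∑ t ∈ s.powerset, (2 : R) ^ (#s - #t) * (-1 : R) ^ (#s - #t) * ∏ i ∈ t, a i
      = (-1 : R) ^ #s * ∏ i ∈ s, (2 - a i) := by
  simp_rw [← mul_pow, ← prod_add_const, ← prod_neg]
  exact prod_congr rfl fun i _ => by ring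

theorem stmt12_general (n k q : ℕ) (G : Fin k → Fin n × Fin n) (v : ℂ) :
    ∑ S ∈ (univ : Finset (Fin k)).powerset,
        (2 : ℂ) ^ (k - S.card) * (-1 : ℂ) ^ (k - S.card) * ZOn n k q G S v
      = (-1 : ℂ) ^ k * ZOn n k q G univ (-v) := by
  simp only [ZOn, mul_sum]
  rw [sum_comm]
  refine sum_congr rfl fun f _ => ?_
  have hexpand := sum_powerset_two_pow_neg_one_pow_mul_prod univ
    fun i => 1 + v * (if f (G i).1 = f (G i).2 then 1 else 0)
  rw [card_univ, Fintype.card_fin] at hexpand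
  rw [hexpand]
  congr 1
  exact prod_congr rfl fun i _ => by ring

/-- For a loopless undirected multigraph `G` with `k` edges:
`∑_{Φ ⊆ G} 2^{k-e(Φ)} (-1)^{k-e(Φ)} Z_Φ(q,v) = (-1)^k Z_G(q,-v)`. -/
theorem stmt12 (n k q : ℕ) (hq : 0 < q) (G : Fin k → Fin n × Fin n)
    (hG : ∀ i, (G i).1 ≠ (G i).2) (v : ℂ) :
    ∑ S ∈ (univ : Finset (Fin k)).powerset,
        (2 : ℂ) ^ (k - S.card) * (-1 : ℂ) ^ (k - S.card) * ZOn n k q G S v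
      = (-1 : ℂ) ^ k * ZOn n k q G univ (-v) :=
  stmt12_general n k q G v
end

section
/- In the free module on directed multigraphs Γ_{n,k}, define 𝓧^{≥}_{n,k}(q) = Σ_G χ_G^{≥}(q)·G and 𝓧^{>}_{n,k}(q) = Σ_G χ_G^{>}(q)·G. Then Δ 𝓧^{≥}_{n,k}(q) = (−1)^k 𝓧^{>}_{n,k}(q), where Δ is the Laplace operator. -/
/-!
Let `mixedColorings q S G` be the maps `f` with `f a < f b` on the edges `(a,b)` in `S` and
`f b ≤ f a` on the others. If the `i`-th edge `(a,b)` of `G` is not a loop, `B_i` takes the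
coefficient of `G` to `x G - x G'`, where `G'` has the loop `(a,a)` as `i`-th edge. That loop
imposes nothing, and splitting by `f b ≤ f a` or `f a < f b` gives, for `i ∉ S`,
`#S(G') = #S(G) + #(S ∪ {i})(G)`; so `B_i` sends the count `#S` to `-#(S ∪ {i})` (both sides
vanish when the `i`-th edge is a loop). Hence `Δ #∅ = (-1)^k #univ`, and composing with `Fin.rev`
turns `f a < f b` on every edge into `f a > f b`.
-/

open Finset

/-- Coefficient of `G` in `B_i H`: the operator `B_i` fixes `H` if its `i`-th
edge is not a loop, and sends `H` with `i`-th edge the loop `(a,a)` to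
`-∑_{m ≠ a}` (`H` with `i`-th edge replaced by `(a,m)`). -/
def bcoeff (n k : ℕ) (i : Fin k) (H G : Fin k → Fin n × Fin n) : ℤ :=
  if (H i).1 = (H i).2 then
    (if (∀ j, j ≠ i → G j = H j) ∧ (G i).1 = (H i).1 ∧ (G i).1 ≠ (G i).2 then -1 else 0)
  else (if G = H then 1 else 0)

/-- The operator `B_i`, extended linearly to the free module on `Γ_{n,k}`
(realized as `R`-valued coefficient functions on `Γ_{n,k}`). -/
noncomputable def Bop {R : Type*} [CommRing R] (n k : ℕ) (i : Fin k)
    (x : (Fin k → Fin n × Fin n) → R) : (Fin k → Fin n × Fin n) → R :=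
  fun G => ∑ H : Fin k → Fin n × Fin n, bcoeff n k i H G • x H

/-- The Laplace operator `Δ = B₁ ⋯ B_k`. -/
noncomputable def Delta {R : Type*} [CommRing R] (n k : ℕ) :
    ((Fin k → Fin n × Fin n) → R) → ((Fin k → Fin n × Fin n) → R) :=
  (List.finRange k).foldr (fun i F => Bop n k i ∘ F) id

open Function

section Bop

variable {n k : ℕ}

lemma bcoeff_of_loop (i : Fin k) (H : Fin k → Fin n × Fin n) {G : Fin k → Fin n × Fin n}
    (hG : (G i).1 = (G i).2) : bcoeff n k i H G = 0 := by
  unfold bcoeff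
  split_ifs <;> grind

lemma bcoeff_of_not_loop (i : Fin k) (H : Fin k → Fin n × Fin n) {G : Fin k → Fin n × Fin n}
    (hG : (G i).1 ≠ (G i).2) :
    bcoeff n k i H G =
      (if H = G then 1 else 0) - (if H = update G i ((G i).1, (G i).1) then 1 else 0) := by
  by_cases hH : (H i).1 = (H i).2
  · have hHG : H ≠ G := by rintro rfl; exact hG hH
    have hH_loop : ((∀ j, j ≠ i → G j = H j) ∧ (G i).1 = (H i).1 ∧ (G i).1 ≠ (G i).2) ↔
        H = update G i ((G i).1, (G i).1) := by
      rw [eq_update_iff, Prod.ext_iff, ← hH]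
      grind
    rw [bcoeff, if_pos hH, if_congr hH_loop rfl rfl]
    simp [hHG, apply_ite]
  · have hHG' : H ≠ update G i ((G i).1, (G i).1) := by rintro rfl; simp at hH
    simp [bcoeff, hH, hHG', eq_comm]

variable {R : Type*} [CommRing R]

lemma Bop_apply_of_loop (i : Fin k) (x : (Fin k → Fin n × Fin n) → R)
    {G : Fin k → Fin n × Fin n} (hG : (G i).1 = (G i).2) : Bop n k i x G = 0 := by
  simp [Bop, bcoeff_of_loop i _ hG]

lemma Bop_apply_of_not_loop (i : Fin k) (x : (Fin k → Fin n × Fin n) → R)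
    {G : Fin k → Fin n × Fin n} (hG : (G i).1 ≠ (G i).2) :
    Bop n k i x G = x G - x (update G i ((G i).1, (G i).1)) := by
  simp [Bop, bcoeff_of_not_loop i _ hG, sub_smul, sum_sub_distrib]

lemma Bop_smul (i : Fin k) (c : R) (x : (Fin k → Fin n × Fin n) → R) :
    Bop n k i (c • x) = c • Bop n k i x := by
  funext G
  simp only [Bop, Pi.smul_apply, smul_sum, smul_comm _ c]

end Bop

section MixedColorings

variable {n k : ℕ} (q : ℕ)

def mixedColorings (S : Finset (Fin k)) (G : Fin k → Fin n × Fin n) :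
    Finset (Fin n → Fin q) :=
  univ.filter fun f => ∀ j, if j ∈ S then f (G j).1 < f (G j).2 else f (G j).2 ≤ f (G j).1

lemma mixedColorings_insert_of_loop {S : Finset (Fin k)} {G : Fin k → Fin n × Fin n}
    {i : Fin k} (hG : (G i).1 = (G i).2) : mixedColorings q (insert i S) G = ∅ := by
  rw [mixedColorings, filter_eq_empty_iff]
  intro f _ hf
  simpa [hG] using hf i

lemma mem_mixedColorings_update {S : Finset (Fin k)} {G : Fin k → Fin n × Fin n} {i : Fin k}
    {e : Fin n × Fin n} {f : Fin n → Fin q} :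
    f ∈ mixedColorings q S (update G i e) ↔
      (if i ∈ S then f e.1 < f e.2 else f e.2 ≤ f e.1) ∧
        ∀ j ≠ i, if j ∈ S then f (G j).1 < f (G j).2 else f (G j).2 ≤ f (G j).1 := by
  simp only [mixedColorings, mem_filter, mem_univ, true_and]
  exact forall_update_iff G fun j e => if j ∈ S then f e.1 < f e.2 else f e.2 ≤ f e.1

lemma card_mixedColorings_update_loop {S : Finset (Fin k)} {i : Fin k} (hi : i ∉ S)
    (G : Fin k → Fin n × Fin n) :
    #(mixedColorings q S (update G i ((G i).1, (G i).1))) =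
      #(mixedColorings q S G) + #(mixedColorings q (insert i S) G) := by
  rw [← card_filter_add_card_filter_not (p := fun f => f (G i).2 ≤ f (G i).1)]
  conv_rhs => rw [← update_eq_self i G]
  congr 2 <;> ext f <;>
    simp +contextual [mem_mixedColorings_update, hi, and_comm, -update_eq_self]

end MixedColorings

section Delta

variable {n k : ℕ} (q : ℕ) {R : Type*} [CommRing R]

lemma Bop_card_mixedColorings {S : Finset (Fin k)} {i : Fin k} (hi : i ∉ S) :
    Bop n k i (fun G => (#(mixedColorings q S G) : R)) =
      fun G => -(#(mixedColorings q (insert i S) G) : R) := by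
  funext G
  by_cases hG : (G i).1 = (G i).2
  · simp [Bop_apply_of_loop _ _ hG, mixedColorings_insert_of_loop q hG]
  · rw [Bop_apply_of_not_loop _ _ hG, card_mixedColorings_update_loop q hi]
    push_cast
    ring

lemma foldr_Bop_card_mixedColorings (S : Finset (Fin k)) {l : List (Fin k)} (hl : l.Nodup)
    (hS : ∀ i ∈ l, i ∉ S) :
    l.foldr (fun i F => Bop n k i ∘ F) id (fun G => (#(mixedColorings q S G) : R)) =
      (-1 : R) ^ l.length • fun G => (#(mixedColorings q (S ∪ l.toFinset) G) : R) := by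
  induction l with
  | nil => simp
  | cons i l ih =>
    obtain ⟨hil, hl⟩ := List.nodup_cons.1 hl
    have hiS : i ∉ S ∪ l.toFinset := by
      simpa [not_or] using ⟨hS i List.mem_cons_self, hil⟩
    rw [List.foldr_cons, comp_apply, ih hl fun j hj => hS j (List.mem_cons_of_mem i hj),
      Bop_smul, Bop_card_mixedColorings q hiS]
    funext G
    simp [pow_succ, union_insert]

lemma Delta_card_mixedColorings_empty :
    Delta n k (fun G => (#(mixedColorings q ∅ G) : R)) =
      (-1 : R) ^ k • fun G => (#(mixedColorings q univ G) : R) := by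
  simpa [Delta] using
    foldr_Bop_card_mixedColorings q (R := R) ∅ (List.nodup_finRange k) (by simp)

lemma mixedColorings_empty (G : Fin k → Fin n × Fin n) :
    mixedColorings q ∅ G = univ.filter fun f => ∀ i, f (G i).2 ≤ f (G i).1 := by
  simp [mixedColorings]

lemma card_mixedColorings_univ (G : Fin k → Fin n × Fin n) :
    #(mixedColorings q univ G) =
      #(univ.filter fun f : Fin n → Fin q => ∀ i, f (G i).2 < f (G i).1) := by
  refine card_nbij' (Fin.rev ∘ ·) (Fin.rev ∘ ·) ?_ ?_ ?_ ?_ <;>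
    simp [mixedColorings, Set.LeftInvOn, Set.MapsTo, comp_def]

end Delta

theorem stmt16_general (n k q : ℕ) :
    Delta n k (fun G : Fin k → Fin n × Fin n =>
        ((univ.filter fun f : Fin n → Fin q => ∀ i, f (G i).2 ≤ f (G i).1).card : ℚ))
      = fun G =>
        (-1 : ℚ) ^ k *
          ((univ.filter fun f : Fin n → Fin q => ∀ i, f (G i).2 < f (G i).1).card : ℚ) := by
  calc Delta n k (fun G => ((univ.filter fun f : Fin n → Fin q =>
          ∀ i, f (G i).2 ≤ f (G i).1).card : ℚ))
      = Delta n k (fun G => (#(mixedColorings q ∅ G) : ℚ)) := by simp only [mixedColorings_empty]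
    _ = (-1 : ℚ) ^ k • fun G => (#(mixedColorings q univ G) : ℚ) :=
        Delta_card_mixedColorings_empty q
    _ = _ := by
      funext G
      simp [card_mixedColorings_univ]

/-- Universal chromatic identity: `Δ 𝓧^{≥}_{n,k}(q) = (-1)^k 𝓧^{>}_{n,k}(q)`,
where the coefficient of `G` in `𝓧^{≥}` (resp. `𝓧^{>}`) counts maps
`f : {1,…,n} → {1,…,q}` with `f(a) ≥ f(b)` (resp. `f(a) > f(b)`) for every edge
`(a,b)` of `G`. -/
theorem stmt16 (n k q : ℕ) (hq : 0 < q) :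
    Delta n k (fun G : Fin k → Fin n × Fin n =>
        ((univ.filter fun f : Fin n → Fin q => ∀ i, f (G i).2 ≤ f (G i).1).card : ℚ))
      = fun G =>
        (-1 : ℚ) ^ k *
          ((univ.filter fun f : Fin n → Fin q => ∀ i, f (G i).2 < f (G i).1).card : ℚ) :=
  stmt16_general n k q
end
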